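/- Let N ≥ 2, let c ∈ ℂ be nonzero, let A be a unital associative ℂ-algebra, and fix one of the two data sets: (orthogonal) ε_i = 1, i' = N+1−i, κ = N/2 − 1, or (symplectic) N = 2n, ε_i = 1 for i ≤ n and −1 for i > n, i' = 2n+1−i, κ = n+1. Let R(u,v) = I + c·P/(u−v) − c·Q/(u−v+cκ) be the corresponding R-matrix, with complex entries viewed in A. Let u, v ∈ ℂ with u ≠ v and u−v+cκ ≠ 0, and let T, S be N×N matrices with entries in A. Then the matrix relation R(u,v)·(T⊗I)·(I⊗S) = (I⊗S)·(T⊗I)·R(u,v) in N²×N² matrices over A holds if and only if for all i,j,k,l ∈ {1,…,N}: [T_{i,j}, S_{k,l}] = (c/(u−v))·(S_{k,j}T_{i,l} − T_{k,j}S_{i,l}) + (c/(u−v+cκ))·Σ_{p=1}^{N} ε_p·(δ_{k,i'} ε_i T_{p,j}S_{p',l} − δ_{l,j'} ε_j S_{k,p'}T_{i,p}). -/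

import Mathlib

/-- The R-matrix `R(u,v) = I + c·P/(u−v) − c·Q/(u−v+cκ)` on `ℂ^N ⊗ ℂ^N`, with its
complex entries viewed inside a unital associative `ℂ`-algebra `A`.  Here
`P_{(a,b),(c,d)} = δ_{a,d} δ_{b,c}` and `Q_{(a,b),(c,d)} = ε_a ε_c δ_{b,a'} δ_{d,c'}`,
for a sign function `ε : Fin N → ℤ` and an index involution `pr : Fin N → Fin N`. -/
noncomputable def RmatA (N : ℕ) (A : Type) [Ring A] [Algebra ℂ A]
    (ε : Fin N → ℤ) (pr : Fin N → Fin N) (κ c u v : ℂ) :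
    Matrix (Fin N × Fin N) (Fin N × Fin N) A :=
  Matrix.of fun p q =>
    (if p = q then 1 else 0)
      + algebraMap ℂ A (c / (u - v)) * (if p.1 = q.2 ∧ p.2 = q.1 then 1 else 0)
      - algebraMap ℂ A (c / (u - v + c * κ)) *
          ((ε p.1 : A) * (ε q.1 : A) * (if p.2 = pr p.1 ∧ q.2 = pr q.1 then 1 else 0))

/-- `(T⊗I)_{(a,b),(c,d)} = T_{a,c} δ_{b,d}` for an `N×N` matrix `T` over `A`. -/
def TtensorI {N : ℕ} {A : Type} [Ring A] (T : Matrix (Fin N) (Fin N) A) :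
    Matrix (Fin N × Fin N) (Fin N × Fin N) A :=
  Matrix.of fun p q => T p.1 q.1 * (if p.2 = q.2 then 1 else 0)

/-- `(I⊗S)_{(a,b),(c,d)} = δ_{a,c} S_{b,d}` for an `N×N` matrix `S` over `A`. -/
def ItensorS {N : ℕ} {A : Type} [Ring A] (S : Matrix (Fin N) (Fin N) A) :
    Matrix (Fin N × Fin N) (Fin N × Fin N) A :=
  Matrix.of fun p q => (if p.1 = q.1 then 1 else 0) * S p.2 q.2

/-!
Write `R(u,v) = 1 + a P − b Q` with `a = c/(u−v)`, `b = c/(u−v+cκ)`, and note that `Q = w wᵀ`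
is of rank one. Multiplying by `P` swaps an index pair, so the `((i,k),(j,l))` entries of the
two sides of the RTT relation are
`T_ij S_kl + a T_kj S_il − b w_{ik} Σ_p ε_p T_pj S_{p'l}` and
`S_kl T_ij + a S_kj T_il − b (Σ_p ε_p S_{kp'} T_ip) w_{jl}`.
The entries of `w` are integers, hence central in `A`, and equating the two expressions is
exactly the componentwise relation.
-/

open Matrix

theorem add_sub_eq_add_sub_iff_sub_eq {G : Type*} [AddCommGroup G] (x x' y y' z z' : G) :
    x + y - z = x' + y' - z' ↔ x - x' = (y' - y) + (z - z') := by
  rw [← sub_eq_zero, ← sub_eq_zero (a := x - x')]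
  constructor <;> intro h <;> rw [← h] <;> abel

section TensorSquare

variable {ι A : Type*} [DecidableEq ι]

def swapMatrix [Zero A] [One A] : Matrix (ι × ι) (ι × ι) A :=
  of fun p q => if p.1 = q.2 ∧ p.2 = q.1 then 1 else 0

variable [Fintype ι]

theorem swapMatrix_mul_apply {κ : Type*} [NonAssocSemiring A] (M : Matrix (ι × ι) κ A)
    (p : ι × ι) (q : κ) : ((swapMatrix : Matrix (ι × ι) (ι × ι) A) * M) p q = M (p.2, p.1) q := by
  simp [swapMatrix, mul_apply, Fintype.sum_prod_type, ite_and]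

theorem mul_swapMatrix_apply {κ : Type*} [NonAssocSemiring A] (M : Matrix κ (ι × ι) A)
    (p : κ) (q : ι × ι) : (M * (swapMatrix : Matrix (ι × ι) (ι × ι) A)) p q = M p (q.2, q.1) := by
  simp [swapMatrix, mul_apply, Fintype.sum_prod_type, ite_and]

variable [Ring A] (ε : ι → ℤ) (pr : ι → ι)

-- `Q = w wᵀ` for this `w = Σ_a ε_a e_a ⊗ e_{a'}`.
def pairingVec : ι × ι → A := fun p => if p.2 = pr p.1 then (ε p.1 : A) else 0

omit [Fintype ι] in
theorem pairingVec_commute (p : ι × ι) (x : A) : Commute (pairingVec ε pr p) x := by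
  unfold pairingVec
  split_ifs
  exacts [Int.cast_commute _ x, Commute.zero_left x]

theorem pairingVec_vecMul_apply {κ : Type*} (M : Matrix (ι × ι) κ A) (q : κ) :
    (pairingVec ε pr ᵥ* M) q = ∑ a, (ε a : A) * M (a, pr a) q := by
  simp [pairingVec, vecMul, dotProduct, Fintype.sum_prod_type, ite_mul]

theorem mulVec_pairingVec_apply {κ : Type*} (M : Matrix κ (ι × ι) A) (p : κ) :
    (M *ᵥ pairingVec ε pr) p = ∑ a, M p (a, pr a) * (ε a : A) := by
  simp [pairingVec, mulVec, dotProduct, Fintype.sum_prod_type, mul_ite]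

end TensorSquare

section RTT

variable {N : ℕ} {A : Type} [Ring A]

theorem TtensorI_mul_ItensorS_apply (T S : Matrix (Fin N) (Fin N) A)
    (p q : Fin N × Fin N) : (TtensorI T * ItensorS S) p q = T p.1 q.1 * S p.2 q.2 := by
  simp [TtensorI, ItensorS, mul_apply, Fintype.sum_prod_type, mul_ite, ite_mul]

theorem ItensorS_mul_TtensorI_apply (T S : Matrix (Fin N) (Fin N) A)
    (p q : Fin N × Fin N) : (ItensorS S * TtensorI T) p q = S p.2 q.2 * T p.1 q.1 := by
  simp [TtensorI, ItensorS, mul_apply, Fintype.sum_prod_type, mul_ite, ite_mul]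

variable [Algebra ℂ A] (ε : Fin N → ℤ) (pr : Fin N → Fin N) (κ c u v : ℂ)

theorem RmatA_eq :
    RmatA N A ε pr κ c u v =
      1 + (c / (u - v)) • swapMatrix
        - (c / (u - v + c * κ)) • vecMulVec (pairingVec ε pr) (pairingVec ε pr) := by
  ext p q
  simp only [RmatA, swapMatrix, pairingVec, of_apply, Matrix.add_apply, Matrix.sub_apply,
    Matrix.smul_apply, one_apply, vecMulVec_apply]
  rw [Algebra.smul_def, Algebra.smul_def]
  congr 2
  split_ifs <;> simp_all

theorem RmatA_mul_apply {m : Type*} (M : Matrix (Fin N × Fin N) m A) (p : Fin N × Fin N) (q : m) :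
    (RmatA N A ε pr κ c u v * M) p q =
      M p q + algebraMap ℂ A (c / (u - v)) * M (p.2, p.1) q
        - algebraMap ℂ A (c / (u - v + c * κ)) *
            (pairingVec ε pr p * (pairingVec ε pr ᵥ* M) q) := by
  rw [RmatA_eq, Matrix.sub_mul, Matrix.add_mul, Matrix.one_mul, Matrix.smul_mul, Matrix.smul_mul,
    vecMulVec_mul]
  simp only [Matrix.add_apply, Matrix.sub_apply, Matrix.smul_apply, swapMatrix_mul_apply,
    vecMulVec_apply, Algebra.smul_def]

theorem mul_RmatA_apply {m : Type*} (M : Matrix m (Fin N × Fin N) A) (p : m) (q : Fin N × Fin N) :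
    (M * RmatA N A ε pr κ c u v) p q =
      M p q + algebraMap ℂ A (c / (u - v)) * M p (q.2, q.1)
        - algebraMap ℂ A (c / (u - v + c * κ)) *
            ((M *ᵥ pairingVec ε pr) p * pairingVec ε pr q) := by
  rw [RmatA_eq, Matrix.mul_sub, Matrix.mul_add, Matrix.mul_one, Matrix.mul_smul, Matrix.mul_smul,
    mul_vecMulVec]
  simp only [Matrix.add_apply, Matrix.sub_apply, Matrix.smul_apply, mul_swapMatrix_apply,
    vecMulVec_apply, Algebra.smul_def]

theorem rtt_apply_iff (T S : Matrix (Fin N) (Fin N) A) (i j k l : Fin N) :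
    (RmatA N A ε pr κ c u v * (TtensorI T * ItensorS S)) (i, k) (j, l) =
        (ItensorS S * TtensorI T * RmatA N A ε pr κ c u v) (i, k) (j, l) ↔
      T i j * S k l - S k l * T i j =
        algebraMap ℂ A (c / (u - v)) * (S k j * T i l - T k j * S i l)
          + algebraMap ℂ A (c / (u - v + c * κ)) *
              ∑ p : Fin N, (ε p : A) *
                (pairingVec ε pr (i, k) * (T p j * S (pr p) l)
                  - pairingVec ε pr (j, l) * (S k (pr p) * T i p)) := by
  have hsum : ∑ p : Fin N, (ε p : A) *
      (pairingVec ε pr (i, k) * (T p j * S (pr p) l)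
        - pairingVec ε pr (j, l) * (S k (pr p) * T i p)) =
        pairingVec ε pr (i, k) * ∑ p : Fin N, (ε p : A) * (T p j * S (pr p) l)
          - (∑ p : Fin N, S k (pr p) * T i p * (ε p : A)) * pairingVec ε pr (j, l) := by
    rw [Finset.mul_sum, Finset.sum_mul, ← Finset.sum_sub_distrib]
    refine Finset.sum_congr rfl fun p _ => ?_
    rw [mul_sub]
    congr 1
    · exact ((pairingVec_commute ε pr _ _).left_comm _).symm
    · rw [(pairingVec_commute ε pr _ _).eq, ← mul_assoc, (Int.cast_commute (ε p) _).eq]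
  rw [RmatA_mul_apply, mul_RmatA_apply, pairingVec_vecMul_apply, mulVec_pairingVec_apply]
  simp only [TtensorI_mul_ItensorS_apply, ItensorS_mul_TtensorI_apply]
  rw [add_sub_eq_add_sub_iff_sub_eq, hsum, mul_sub, mul_sub]

end RTT

theorem rtt_iff_componentwise_general (N : ℕ) (c : ℂ)
    (A : Type) [Ring A] [Algebra ℂ A]
    (ε : Fin N → ℤ) (pr : Fin N → Fin N) (κ : ℂ)
    (u v : ℂ)
    (T S : Matrix (Fin N) (Fin N) A) :
    RmatA N A ε pr κ c u v * TtensorI T * ItensorS S =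
        ItensorS S * TtensorI T * RmatA N A ε pr κ c u v ↔
      ∀ i j k l : Fin N,
        T i j * S k l - S k l * T i j =
          algebraMap ℂ A (c / (u - v)) * (S k j * T i l - T k j * S i l)
            + algebraMap ℂ A (c / (u - v + c * κ)) *
                ∑ p : Fin N, (ε p : A) *
                  ((if k = pr i then (ε i : A) else 0) * (T p j * S (pr p) l)
                    - (if l = pr j then (ε j : A) else 0) * (S k (pr p) * T i p)) := by
  rw [Matrix.mul_assoc, ← Matrix.ext_iff]
  constructor
  · intro h i j k l
    exact (rtt_apply_iff ε pr κ c u v T S i j k l).1 (h (i, k) (j, l))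
  · rintro h ⟨i, k⟩ ⟨j, l⟩
    exact (rtt_apply_iff ε pr κ c u v T S i j k l).2 (h i j k l)

/-- For the orthogonal data set (`ε_i = 1`, `i' = N+1−i` i.e. `Fin.rev`, `κ = N/2 − 1`)
or the symplectic data set (`N = 2n`, `ε_i = ±1`, `i' = 2n+1−i` i.e. `Fin.rev`,
`κ = n+1`), the matrix RTT-relation
`R(u,v)·(T⊗I)·(I⊗S) = (I⊗S)·(T⊗I)·R(u,v)` holds if and only if the componentwise
commutation relations hold: for all `i,j,k,l`,
`[T_{i,j}, S_{k,l}] = (c/(u−v))·(S_{k,j}T_{i,l} − T_{k,j}S_{i,l})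
 + (c/(u−v+cκ))·Σ_p ε_p·(δ_{k,i'} ε_i T_{p,j}S_{p',l} − δ_{l,j'} ε_j S_{k,p'}T_{i,p})`. -/
theorem rtt_iff_componentwise (N : ℕ) (hN : 2 ≤ N) (c : ℂ) (hc : c ≠ 0)
    (A : Type) [Ring A] [Algebra ℂ A]
    (ε : Fin N → ℤ) (pr : Fin N → Fin N) (κ : ℂ)
    (hdata : ((∀ i, ε i = 1) ∧ pr = Fin.rev ∧ κ = (N : ℂ) / 2 - 1) ∨
      (∃ n, N = 2 * n ∧ (∀ i : Fin N, ε i = if (i : ℕ) < n then 1 else -1) ∧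
        pr = Fin.rev ∧ κ = (n : ℂ) + 1))
    (u v : ℂ) (huv : u ≠ v) (hκ : u - v + c * κ ≠ 0)
    (T S : Matrix (Fin N) (Fin N) A) :
    RmatA N A ε pr κ c u v * TtensorI T * ItensorS S =
        ItensorS S * TtensorI T * RmatA N A ε pr κ c u v ↔
      ∀ i j k l : Fin N,
        T i j * S k l - S k l * T i j =
          algebraMap ℂ A (c / (u - v)) * (S k j * T i l - T k j * S i l)
            + algebraMap ℂ A (c / (u - v + c * κ)) *
                ∑ p : Fin N, (ε p : A) *
                  ((if k = pr i then (ε i : A) else 0) * (T p j * S (pr p) l)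
                    - (if l = pr j then (ε j : A) else 0) * (S k (pr p) * T i p)) :=
  rtt_iff_componentwise_general N c A ε pr κ u v T S
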